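/- Let X be a finite-dimensional Banach space and let Y be a uniformly convex Banach space. Then NAπ(X ⊗π Y) is ‖·‖π-dense in X ⊗π Y. -/

import Mathlib

/-!
Fix `z ≠ 0` and a norming functional of `z`; it is `lift G` for some `G : X → Y*` of norm one.
Take a representation `z = ∑ xₙ ⊗ yₙ` whose cost `∑ ‖xₙ‖‖yₙ‖` exceeds `‖z‖ = ∑ G xₙ yₙ` by less
than `δ`. The pairs with `G xₙ yₙ ≤ (1 - η)‖xₙ‖‖yₙ‖` have total cost at most `δ / η` and are
dropped. Every other pair is almost normed by `G`, and compactness of the unit sphere of `X`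
together with uniform convexity of `Y` (which also makes every functional on `Y` attain its norm)
moves it to a nearby pair `(a, b)` with `G a b = ‖a‖‖b‖`. The new tensor `∑ aₙ ⊗ bₙ` is normed by
`lift G` along this representation, so it attains its projective norm, and it is close to `z`.
-/

noncomputable section

open scoped BigOperators

/-- The predicate stating that the Banach space `Z`, together with the bounded bilinear map
`t : X → Y → Z` and the correspondence `lift` between operators `X → Y*` and functionals on `Z`,
realizes the projective tensor product `X ⊗π Y`.  The field `norm_eq_sInf` says that the norm of
`Z` is the projective norm: `‖z‖π = inf {∑ₙ ‖xₙ‖‖yₙ‖ : z = ∑ₙ xₙ ⊗ yₙ}`, and the `lift` fields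
encode the canonical isometric identification `(X ⊗π Y)* = L(X, Y*)`. -/
structure IsProjTensorProduct (X Y Z : Type*)
    [NormedAddCommGroup X] [NormedSpace ℝ X]
    [NormedAddCommGroup Y] [NormedSpace ℝ Y]
    [NormedAddCommGroup Z] [NormedSpace ℝ Z]
    (t : X →L[ℝ] Y →L[ℝ] Z)
    (lift : (X →L[ℝ] (Y →L[ℝ] ℝ)) → (Z →L[ℝ] ℝ)) : Prop where
  norm_tmul_le : ∀ (x : X) (y : Y), ‖t x y‖ ≤ ‖x‖ * ‖y‖
  exists_rep : ∀ z : Z, ∃ (x : ℕ → X) (y : ℕ → Y),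
    Summable (fun n => ‖x n‖ * ‖y n‖) ∧ HasSum (fun n => t (x n) (y n)) z
  norm_eq_sInf : ∀ z : Z, ‖z‖ = sInf {r : ℝ | ∃ (x : ℕ → X) (y : ℕ → Y),
    Summable (fun n => ‖x n‖ * ‖y n‖) ∧ HasSum (fun n => t (x n) (y n)) z ∧
    r = ∑' n, ‖x n‖ * ‖y n‖}
  lift_tmul : ∀ (G : X →L[ℝ] (Y →L[ℝ] ℝ)) (x : X) (y : Y), lift G (t x y) = G x y
  norm_lift : ∀ G : X →L[ℝ] (Y →L[ℝ] ℝ), ‖lift G‖ = ‖G‖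
  lift_surjective : Function.Surjective lift

/-- An element `z ∈ X ⊗π Y` attains its projective norm if it admits a representation
`z = ∑ₙ xₙ ⊗ yₙ` with `∑ₙ ‖xₙ‖‖yₙ‖ < ∞` and `‖z‖π = ∑ₙ ‖xₙ‖‖yₙ‖`. -/
def AttainsProjNorm {X Y Z : Type*}
    [NormedAddCommGroup X] [NormedSpace ℝ X]
    [NormedAddCommGroup Y] [NormedSpace ℝ Y]
    [NormedAddCommGroup Z] [NormedSpace ℝ Z]
    (t : X →L[ℝ] Y →L[ℝ] Z) (z : Z) : Prop :=
  ∃ (x : ℕ → X) (y : ℕ → Y),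
    Summable (fun n => ‖x n‖ * ‖y n‖) ∧ HasSum (fun n => t (x n) (y n)) z ∧
    ‖z‖ = ∑' n, ‖x n‖ * ‖y n‖

open Metric Filter Topology

theorem IsCompact.exists_pos_forall_near_max_dist_lt {α : Type*} [PseudoMetricSpace α]
    {K : Set α} (hK : IsCompact K) {f : α → ℝ} (hf : ContinuousOn f K) {M : ℝ}
    (hM : ∀ u ∈ K, f u ≤ M) {ζ : ℝ} (hζ : 0 < ζ) :
    ∃ η > 0, ∀ u ∈ K, M - η < f u → ∃ a ∈ K, f a = M ∧ dist u a < ζ := by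
  set S := {a ∈ K | f a = M}
  -- `f` stays uniformly below `M` on the compact set of points of `K` far from the maximizers.
  have hgap : ∀ u ∈ K \ thickening ζ S, 0 < M - f u := fun u hu =>
    sub_pos.2 <| (hM u hu.1).lt_of_ne fun hu' => hu.2 (self_subset_thickening hζ S ⟨hu.1, hu'⟩)
  obtain ⟨η, hη, hηle⟩ := (hK.diff isOpen_thickening).exists_forall_le' (f := fun u => M - f u)
    (continuousOn_const.sub (hf.mono Set.sdiff_subset)) hgap
  refine ⟨η, hη, fun u hu hlt => ?_⟩
  have hnear : u ∈ thickening ζ S := by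
    by_contra hfar
    linarith [hηle u ⟨hu, hfar⟩]
  obtain ⟨a, ⟨haK, haM⟩, hua⟩ := mem_thickening_iff.1 hnear
  exact ⟨a, haK, haM, hua⟩

theorem ContinuousLinearMap.exists_pos_forall_near_opNorm_exists_norm_apply_eq
    {𝕜 X W : Type*} [NontriviallyNormedField 𝕜] [NormedAddCommGroup X] [NormedSpace 𝕜 X]
    [ProperSpace X] [NormedAddCommGroup W] [NormedSpace 𝕜 W] (G : X →L[𝕜] W) {ζ : ℝ}
    (hζ : 0 < ζ) :
    ∃ η > 0, ∀ u : X, ‖u‖ = 1 → ‖G‖ - η < ‖G u‖ →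
      ∃ a : X, ‖a‖ = 1 ∧ ‖G a‖ = ‖G‖ ∧ ‖u - a‖ < ζ := by
  obtain ⟨η, hη, hnear⟩ := (isCompact_sphere (0 : X) 1).exists_pos_forall_near_max_dist_lt
    (f := fun u => ‖G u‖) G.continuous.norm.continuousOn
    (fun u hu => (G.le_opNorm u).trans (by rw [mem_sphere_zero_iff_norm.1 hu, mul_one])) hζ
  refine ⟨η, hη, fun u hu hGu => ?_⟩
  obtain ⟨a, ha, hGa, hua⟩ := hnear u (mem_sphere_zero_iff_norm.2 hu) hGu
  exact ⟨a, mem_sphere_zero_iff_norm.1 ha, hGa, by rwa [← dist_eq_norm]⟩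

theorem ContinuousLinearMap.exists_norm_le_one_lt_apply {E : Type*} [NormedAddCommGroup E]
    [NormedSpace ℝ E] (g : E →L[ℝ] ℝ) {r : ℝ} (hr : r < ‖g‖) :
    ∃ v : E, ‖v‖ ≤ 1 ∧ r < g v := by
  obtain ⟨x, hx, hrx⟩ := g.exists_lt_apply_of_lt_opNorm hr
  rcases le_or_gt 0 (g x) with hgx | hgx
  · exact ⟨x, hx.le, by rwa [Real.norm_of_nonneg hgx] at hrx⟩
  · refine ⟨-x, by rw [norm_neg]; exact hx.le, ?_⟩
    rwa [map_neg, ← Real.norm_of_nonpos hgx.le]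

section UniformConvex

variable {Y : Type*} [NormedAddCommGroup Y] [NormedSpace ℝ Y] [UniformConvexSpace Y]

theorem exists_pos_forall_norm_sub_le_of_one_sub_lt_apply {ε : ℝ} (hε : 0 < ε) :
    ∃ δ > 0, ∀ g : Y →L[ℝ] ℝ, ‖g‖ ≤ 1 → ∀ v w : Y, ‖v‖ ≤ 1 → ‖w‖ ≤ 1 →
      1 - δ < g v → 1 - δ < g w → ‖v - w‖ ≤ ε := by
  obtain ⟨δ, hδ, hconvex⟩ := exists_forall_closed_ball_dist_add_le_two_sub Y hε
  refine ⟨δ / 2, half_pos hδ, fun g hg v w hv hw hgv hgw => ?_⟩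
  by_contra! hvw
  have hgvw : g (v + w) ≤ ‖v + w‖ :=
    (Real.le_norm_self _).trans ((g.le_opNorm _).trans (mul_le_of_le_one_left (norm_nonneg _) hg))
  linarith [hconvex hv hw hvw.le, map_add g v w]

theorem ContinuousLinearMap.exists_norm_eq_one_apply_eq_one [CompleteSpace Y] {g : Y →L[ℝ] ℝ}
    (hg : ‖g‖ = 1) : ∃ v : Y, ‖v‖ = 1 ∧ g v = 1 := by
  have hlt : ∀ k : ℕ, 1 - 1 / ((k : ℝ) + 1) < ‖g‖ := fun k => by
    rw [hg]; exact sub_lt_self 1 Nat.one_div_pos_of_nat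
  choose v hv hgv using fun k => g.exists_norm_le_one_lt_apply (hlt k)
  have hgv_le : ∀ k, g (v k) ≤ 1 := fun k =>
    (Real.le_norm_self _).trans ((g.le_opNorm _).trans (by rw [hg, one_mul]; exact hv k))
  have hlim : Tendsto (fun k => g (v k)) atTop (𝓝 1) := by
    refine tendsto_of_tendsto_of_tendsto_of_le_of_le ?_ tendsto_const_nhds
      (fun k => (hgv k).le) hgv_le
    simpa using tendsto_const_nhds.sub (tendsto_one_div_add_atTop_nhds_zero_nat (𝕜 := ℝ))
  have hcauchy : CauchySeq v := by
    refine Metric.cauchySeq_iff.2 fun ε hε => ?_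
    obtain ⟨δ, hδ, hslice⟩ := exists_pos_forall_norm_sub_le_of_one_sub_lt_apply (Y := Y)
      (half_pos hε)
    obtain ⟨N, hN⟩ := eventually_atTop.1 (hlim.eventually (lt_mem_nhds (sub_lt_self 1 hδ)))
    refine ⟨N, fun m hm n hn => ?_⟩
    rw [dist_eq_norm]
    exact (hslice g hg.le _ _ (hv m) (hv n) (hN m hm) (hN n hn)).trans_lt (half_lt_self hε)
  obtain ⟨w, hvw⟩ := cauchySeq_tendsto_of_complete hcauchy
  have hgw : g w = 1 := tendsto_nhds_unique ((g.continuous.tendsto w).comp hvw) hlim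
  have hw : ‖w‖ ≤ 1 := by
    simpa using isClosed_closedBall.mem_of_tendsto hvw (Eventually.of_forall fun k =>
      mem_closedBall_zero_iff.2 (hv k))
  refine ⟨w, le_antisymm hw ?_, hgw⟩
  calc 1 = g w := hgw.symm
    _ ≤ ‖g‖ * ‖w‖ := (Real.le_norm_self _).trans (g.le_opNorm w)
    _ = ‖w‖ := by rw [hg, one_mul]

end UniformConvex

theorem norm_sub_norm_smul {E : Type*} [NormedAddCommGroup E] [NormedSpace ℝ E] (x a : E) :
    ‖x - ‖x‖ • a‖ = ‖x‖ * ‖‖x‖⁻¹ • x - a‖ := by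
  rcases eq_or_ne x 0 with rfl | hx
  · simp
  rw [← norm_smul_of_nonneg (norm_nonneg x), smul_sub, smul_inv_smul₀ (norm_ne_zero_iff.2 hx)]

section NormingPairs

variable {X Y : Type*} [NormedAddCommGroup X] [NormedSpace ℝ X] [ProperSpace X]
  [NormedAddCommGroup Y] [NormedSpace ℝ Y] [CompleteSpace Y] [UniformConvexSpace Y]
  {G : X →L[ℝ] Y →L[ℝ] ℝ}

theorem exists_pos_forall_near_one_exists_apply_eq_one (hG : ‖G‖ = 1) {ε : ℝ} (hε : 0 < ε) :
    ∃ η > 0, ∀ u v, ‖u‖ = 1 → ‖v‖ ≤ 1 → 1 - η < G u v →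
      ∃ a b, ‖a‖ = 1 ∧ ‖b‖ = 1 ∧ G a b = 1 ∧ ‖u - a‖ ≤ ε ∧ ‖v - b‖ ≤ ε := by
  obtain ⟨δ, hδ, hslice⟩ := exists_pos_forall_norm_sub_le_of_one_sub_lt_apply (Y := Y) hε
  obtain ⟨η, hη, hnear⟩ :=
    G.exists_pos_forall_near_opNorm_exists_norm_apply_eq (lt_min hε (half_pos hδ))
  refine ⟨min η (δ / 2), lt_min hη (half_pos hδ), fun u v hu hv huv => ?_⟩
  have hGv : ∀ w : X, G w v ≤ ‖w‖ := fun w =>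
    (Real.le_norm_self _).trans <| (G.le_opNorm₂ w v).trans <| by
      rw [hG, one_mul]; exact mul_le_of_le_one_right (norm_nonneg w) hv
  have hGu : ‖G‖ - η < ‖G u‖ := by
    have hGuv : G u v ≤ ‖G u‖ :=
      (Real.le_norm_self _).trans ((G u).le_opNorm v |>.trans
        (mul_le_of_le_one_right (norm_nonneg _) hv))
    linarith [min_le_left η (δ / 2)]
  obtain ⟨a, ha, hGa, hua⟩ := hnear u hu hGu
  rw [hG] at hGa
  obtain ⟨b, hb, hab⟩ := ContinuousLinearMap.exists_norm_eq_one_apply_eq_one hGa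
  have hav : 1 - δ < G a v := by
    have hdiff : G u v - G a v ≤ ‖u - a‖ := by
      rw [← sub_apply, ← map_sub]; exact hGv (u - a)
    linarith [min_le_right η (δ / 2), min_le_right ε (δ / 2)]
  exact ⟨a, b, ha, hb, hab, hua.le.trans (min_le_left _ _),
    hslice (G a) hGa.le v b hv hb.le hav (by rw [hab]; linarith)⟩

theorem exists_pos_forall_near_norm_mul_exists_apply_eq_norm_mul (hG : ‖G‖ = 1) {ε : ℝ}
    (hε : 0 < ε) :
    ∃ η > 0, ∀ x y, (1 - η) * (‖x‖ * ‖y‖) < G x y →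
      ∃ a b, ‖a‖ = ‖x‖ ∧ ‖b‖ = ‖y‖ ∧ G a b = ‖a‖ * ‖b‖ ∧
        ‖x - a‖ ≤ ε * ‖x‖ ∧ ‖y - b‖ ≤ ε * ‖y‖ := by
  obtain ⟨η, hη, hunit⟩ := exists_pos_forall_near_one_exists_apply_eq_one hG hε
  refine ⟨η, hη, fun x y hxy => ?_⟩
  have hx : x ≠ 0 := by rintro rfl; simp at hxy
  have hy : y ≠ 0 := by rintro rfl; simp at hxy
  have huv : 1 - η < G (‖x‖⁻¹ • x) (‖y‖⁻¹ • y) := by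
    have hs : 0 < ‖x‖ * ‖y‖ := mul_pos (norm_pos_iff.2 hx) (norm_pos_iff.2 hy)
    have hscale : G (‖x‖⁻¹ • x) (‖y‖⁻¹ • y) = G x y / (‖x‖ * ‖y‖) := by
      simp only [map_smul, smul_apply, smul_eq_mul, div_eq_inv_mul, mul_inv]; ring
    rwa [hscale, lt_div_iff₀ hs]
  obtain ⟨a, b, ha, hb, hab, hua, hvb⟩ :=
    hunit _ _ (norm_smul_inv_norm hx) (norm_smul_inv_norm hy).le huv
  refine ⟨‖x‖ • a, ‖y‖ • b, ?_, ?_, ?_, ?_, ?_⟩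
  · rw [norm_smul_of_nonneg (norm_nonneg _), ha, mul_one]
  · rw [norm_smul_of_nonneg (norm_nonneg _), hb, mul_one]
  · simp only [map_smul, smul_apply, smul_eq_mul, hab,
      norm_smul_of_nonneg (norm_nonneg _), ha, hb]
    ring
  · rw [norm_sub_norm_smul, mul_comm ε]; exact mul_le_mul_of_nonneg_left hua (norm_nonneg _)
  · rw [norm_sub_norm_smul, mul_comm ε]; exact mul_le_mul_of_nonneg_left hvb (norm_nonneg _)

-- The second term of the bound pays for replacing by `0` the pairs that `G` does not almost norm.
theorem exists_pos_forall_exists_apply_eq_norm_mul_norm_sub_le (hG : ‖G‖ = 1) {Z : Type*}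
    [NormedAddCommGroup Z] [NormedSpace ℝ Z] {t : X →L[ℝ] Y →L[ℝ] Z}
    (ht : ∀ x y, ‖t x y‖ ≤ ‖x‖ * ‖y‖) {ε : ℝ} (hε : 0 < ε) :
    ∃ η > 0, ∀ x y, ∃ a b, G a b = ‖a‖ * ‖b‖ ∧ ‖a‖ * ‖b‖ ≤ ‖x‖ * ‖y‖ ∧
      ‖t x y - t a b‖ ≤ ε * (‖x‖ * ‖y‖) + (‖x‖ * ‖y‖ - G x y) / η := by
  obtain ⟨η, hη, hnear⟩ := exists_pos_forall_near_norm_mul_exists_apply_eq_norm_mul hG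
    (half_pos hε)
  refine ⟨η, hη, fun x y => ?_⟩
  have hGxy : G x y ≤ ‖x‖ * ‖y‖ :=
    (Real.le_norm_self _).trans ((G.le_opNorm₂ x y).trans (by rw [hG, one_mul]))
  by_cases hxy : (1 - η) * (‖x‖ * ‖y‖) < G x y
  · obtain ⟨a, b, ha, hb, hab, hxa, hyb⟩ := hnear x y hxy
    refine ⟨a, b, hab, by rw [ha, hb], ?_⟩
    have hsplit : t x y - t a b = t (x - a) y + t a (y - b) := by
      simp only [map_sub, sub_apply]; abel
    calc ‖t x y - t a b‖ ≤ ‖x - a‖ * ‖y‖ + ‖a‖ * ‖y - b‖ := by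
          rw [hsplit]; exact (norm_add_le _ _).trans (add_le_add (ht _ _) (ht _ _))
      _ ≤ ε / 2 * ‖x‖ * ‖y‖ + ‖x‖ * (ε / 2 * ‖y‖) := by rw [ha]; gcongr
      _ = ε * (‖x‖ * ‖y‖) := by ring
      _ ≤ ε * (‖x‖ * ‖y‖) + (‖x‖ * ‖y‖ - G x y) / η :=
          le_add_of_nonneg_right (div_nonneg (sub_nonneg.2 hGxy) hη.le)
  · refine ⟨0, 0, by simp, by simp only [norm_zero, mul_zero]; positivity, ?_⟩
    have hdrop : ‖x‖ * ‖y‖ ≤ (‖x‖ * ‖y‖ - G x y) / η := by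
      rw [le_div_iff₀ hη]; linarith [not_lt.1 hxy]
    rw [map_zero, sub_zero]
    linarith [ht x y, mul_nonneg hε.le (mul_nonneg (norm_nonneg x) (norm_nonneg y))]

end NormingPairs

theorem attainsProjNorm_zero {X Y Z : Type*} [NormedAddCommGroup X] [NormedSpace ℝ X]
    [NormedAddCommGroup Y] [NormedSpace ℝ Y] [NormedAddCommGroup Z] [NormedSpace ℝ Z]
    (t : X →L[ℝ] Y →L[ℝ] Z) : AttainsProjNorm t 0 :=
  ⟨0, 0, by simp [summable_zero], by simp [hasSum_zero], by simp⟩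

namespace IsProjTensorProduct

variable {X Y Z : Type*} [NormedAddCommGroup X] [NormedSpace ℝ X]
  [NormedAddCommGroup Y] [NormedSpace ℝ Y] [NormedAddCommGroup Z] [NormedSpace ℝ Z]
  {t : X →L[ℝ] Y →L[ℝ] Z} {lift : (X →L[ℝ] (Y →L[ℝ] ℝ)) → (Z →L[ℝ] ℝ)}
  {z : Z} {x : ℕ → X} {y : ℕ → Y}

theorem norm_le_tsum (h : IsProjTensorProduct X Y Z t lift)
    (hs : Summable fun n => ‖x n‖ * ‖y n‖) (hz : HasSum (fun n => t (x n) (y n)) z) :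
    ‖z‖ ≤ ∑' n, ‖x n‖ * ‖y n‖ := by
  rw [h.norm_eq_sInf z]
  refine csInf_le ⟨0, ?_⟩ ⟨x, y, hs, hz, rfl⟩
  rintro r ⟨x', y', -, -, rfl⟩
  exact tsum_nonneg fun n => mul_nonneg (norm_nonneg _) (norm_nonneg _)

theorem exists_hasSum_tsum_lt (h : IsProjTensorProduct X Y Z t lift) (z : Z) {δ : ℝ}
    (hδ : 0 < δ) :
    ∃ (x : ℕ → X) (y : ℕ → Y), Summable (fun n => ‖x n‖ * ‖y n‖) ∧
      HasSum (fun n => t (x n) (y n)) z ∧ ∑' n, ‖x n‖ * ‖y n‖ < ‖z‖ + δ := by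
  have hlt := lt_add_of_pos_right ‖z‖ hδ
  nth_rw 1 [h.norm_eq_sInf z] at hlt
  obtain ⟨x, y, hs, hz⟩ := h.exists_rep z
  obtain ⟨_, ⟨x', y', hs', hz', rfl⟩, hcost⟩ :=
    exists_lt_of_csInf_lt (by exact ⟨_, x, y, hs, hz, rfl⟩) hlt
  exact ⟨x', y', hs', hz', hcost⟩

theorem exists_norm_eq_one_lift_apply_eq_norm (h : IsProjTensorProduct X Y Z t lift)
    (hz : z ≠ 0) : ∃ G, ‖G‖ = 1 ∧ lift G z = ‖z‖ := by
  obtain ⟨f, hf, hfz⟩ := exists_dual_vector ℝ z (norm_ne_zero_iff.2 hz)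
  obtain ⟨G, rfl⟩ := h.lift_surjective f
  exact ⟨G, by rw [← h.norm_lift, hf], by exact_mod_cast hfz⟩

theorem hasSum_lift_apply (h : IsProjTensorProduct X Y Z t lift) (G : X →L[ℝ] Y →L[ℝ] ℝ)
    (hz : HasSum (fun n => t (x n) (y n)) z) : HasSum (fun n => G (x n) (y n)) (lift G z) := by
  simpa only [h.lift_tmul] using (lift G).hasSum hz

theorem attainsProjNorm_of_forall_apply_eq (h : IsProjTensorProduct X Y Z t lift)
    {G : X →L[ℝ] Y →L[ℝ] ℝ} (hG : ‖G‖ ≤ 1) (hs : Summable fun n => ‖x n‖ * ‖y n‖)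
    (hz : HasSum (fun n => t (x n) (y n)) z) (hxy : ∀ n, G (x n) (y n) = ‖x n‖ * ‖y n‖) :
    AttainsProjNorm t z := by
  refine ⟨x, y, hs, hz, le_antisymm (h.norm_le_tsum hs hz) ?_⟩
  calc ∑' n, ‖x n‖ * ‖y n‖ = lift G z := by
        rw [← funext hxy]; exact (h.hasSum_lift_apply G hz).tsum_eq
    _ ≤ ‖lift G‖ * ‖z‖ := (Real.le_norm_self _).trans ((lift G).le_opNorm z)
    _ ≤ ‖z‖ := by rw [h.norm_lift]; exact mul_le_of_le_one_left (norm_nonneg z) hG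

theorem exists_attainsProjNorm_norm_sub_le [CompleteSpace Z]
    (h : IsProjTensorProduct X Y Z t lift) {G : X →L[ℝ] Y →L[ℝ] ℝ} (hG : ‖G‖ ≤ 1)
    {a : ℕ → X} {b : ℕ → Y} {ε η : ℝ} (hs : Summable fun n => ‖x n‖ * ‖y n‖)
    (hz : HasSum (fun n => t (x n) (y n)) z) (hab : ∀ n, G (a n) (b n) = ‖a n‖ * ‖b n‖)
    (hle : ∀ n, ‖a n‖ * ‖b n‖ ≤ ‖x n‖ * ‖y n‖)
    (hclose : ∀ n, ‖t (x n) (y n) - t (a n) (b n)‖ ≤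
      ε * (‖x n‖ * ‖y n‖) + (‖x n‖ * ‖y n‖ - G (x n) (y n)) / η) :
    ∃ z', AttainsProjNorm t z' ∧
      ‖z - z'‖ ≤ ε * ∑' n, ‖x n‖ * ‖y n‖ + (∑' n, ‖x n‖ * ‖y n‖ - lift G z) / η := by
  have hs' : Summable fun n => ‖a n‖ * ‖b n‖ :=
    hs.of_nonneg_of_le (fun n => mul_nonneg (norm_nonneg _) (norm_nonneg _)) hle
  obtain ⟨z', hz'⟩ : Summable fun n => t (a n) (b n) :=
    .of_norm_bounded hs' fun n => h.norm_tmul_le _ _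
  refine ⟨z', h.attainsProjNorm_of_forall_apply_eq hG hs' hz' hab,
    (hz.sub hz').norm_le_of_bounded ?_ hclose⟩
  exact (hs.hasSum.mul_left ε).add ((hs.hasSum.sub (h.hasSum_lift_apply G hz)).div_const η)

end IsProjTensorProduct

/-- If `X` is finite dimensional and `Y` is uniformly convex, then the set
of norm-attaining tensors is dense in `X ⊗π Y`. -/
theorem tensor_normAttaining_dense_of_finiteDimensional_uniformConvex
    {X Y Z : Type*} [NormedAddCommGroup X] [NormedSpace ℝ X] [FiniteDimensional ℝ X]
    [NormedAddCommGroup Y] [NormedSpace ℝ Y] [CompleteSpace Y] [UniformConvexSpace Y]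
    [NormedAddCommGroup Z] [NormedSpace ℝ Z] [CompleteSpace Z]
    (t : X →L[ℝ] Y →L[ℝ] Z) (lift : (X →L[ℝ] (Y →L[ℝ] ℝ)) → (Z →L[ℝ] ℝ))
    (h : IsProjTensorProduct X Y Z t lift) :
    Dense {z : Z | AttainsProjNorm t z} := by
  refine Metric.dense_iff.2 fun z ε hε => ?_
  obtain rfl | hz := eq_or_ne z 0
  · exact ⟨0, mem_ball_self hε, attainsProjNorm_zero t⟩
  obtain ⟨G, hG, hGz⟩ := h.exists_norm_eq_one_lift_apply_eq_norm hz
  set ε' := ε / (2 * (‖z‖ + 1))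
  obtain ⟨η, hη, hpair⟩ :=
    exists_pos_forall_exists_apply_eq_norm_mul_norm_sub_le hG h.norm_tmul_le
      (show 0 < ε' by positivity)
  obtain ⟨x, y, hs, hxy, hcost⟩ :=
    h.exists_hasSum_tsum_lt z (show 0 < min 1 (ε * η / 2) by positivity)
  choose a b hab hle hclose using fun n => hpair (x n) (y n)
  obtain ⟨z', hz', hdist⟩ := h.exists_attainsProjNorm_norm_sub_le hG.le hs hxy hab hle hclose
  refine ⟨z', ?_, hz'⟩
  set S := ∑' n, ‖x n‖ * ‖y n‖
  have hS : 0 ≤ S := tsum_nonneg fun n => mul_nonneg (norm_nonneg _) (norm_nonneg _)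
  have hspread : ε' * S ≤ ε / 2 := by
    calc ε' * S ≤ ε' * (‖z‖ + 1) := by gcongr; linarith [min_le_left 1 (ε * η / 2)]
      _ = ε / 2 := by simp only [ε']; field_simp
  have hexcess : (S - ‖z‖) / η < ε / 2 := by
    rw [div_lt_iff₀ hη]; linarith [min_le_right 1 (ε * η / 2)]
  rw [mem_ball, dist_comm, dist_eq_norm]
  linarith [hGz ▸ hdist]
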